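/- arXiv:0901.3408 — 2 statements merged into one kernel-verified Lean document; each statement's English description precedes it below -/
import Mathlib

section
/- A set S ⊆ ℂ^n is uniquely 1-sparse decodable (i.e., for every unitary matrix Ψ, at most one element of S is 1-sparse with respect to Ψ) if and only if for all distinct a, b ∈ S we have 0 < |⟨a,b⟩| < ‖a‖₂·‖b‖₂, where for this statement all elements of S are assumed nonzero and n ≥ 2. -/
open Matrix Finset Complex

noncomputable def inn {n : ℕ} (a b : Fin n → ℂ) : ℂ := ∑ i, (starRingEnd ℂ) (a i) * b i

noncomputable def l2norm {n : ℕ} (x : Fin n → ℂ) : ℝ := Real.sqrt (∑ i, ‖x i‖ ^ 2)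

def sparse {n : ℕ} (k : ℕ) (Ψ : Matrix (Fin n) (Fin n) ℂ) (x : Fin n → ℂ) : Prop :=
  (Finset.univ.filter (fun i => (Ψᴴ *ᵥ x) i ≠ 0)).card ≤ k

/-!
For unitary `Ψ`, a vector is 1-sparse with respect to `Ψ` exactly when it is a multiple of a
column of `Ψ`; the columns of a unitary matrix are orthonormal, and every orthonormal basis of
`ℂⁿ` is the set of columns of a unitary matrix. Hence two nonzero vectors are simultaneously
1-sparse for some unitary iff they are multiples of vectors of one orthonormal basis, i.e. iff
they are orthogonal or collinear, and collinearity is the equality case of Cauchy–Schwarz.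
-/

open scoped InnerProductSpace

section InnerProductSpace

variable {𝕜 E : Type*} [RCLike 𝕜] [NormedAddCommGroup E] [InnerProductSpace 𝕜 E]

theorem Orthonormal.inner_smul_smul_eq_zero_or_norm_inner_eq {ι : Type*} {v : ι → E}
    (hv : Orthonormal 𝕜 v) (c d : 𝕜) (i j : ι) :
    ⟪c • v i, d • v j⟫_𝕜 = 0 ∨ ‖⟪c • v i, d • v j⟫_𝕜‖ = ‖c • v i‖ * ‖d • v j‖ := by
  by_cases hij : i = j
  · subst hij
    right
    simp [inner_smul_left, inner_smul_right, norm_smul, hv.1 i, mul_comm]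
  · left
    simp [inner_smul_left, inner_smul_right, hv.2 hij]

variable [FiniteDimensional 𝕜 E] {ι : Type*} [Fintype ι]

theorem Orthonormal.exists_orthonormalBasis_range_subset {κ : Type*} {v : κ → E}
    (hv : Orthonormal 𝕜 v) (card_ι : Module.finrank 𝕜 E = Fintype.card ι) :
    ∃ B : OrthonormalBasis ι 𝕜 E, Set.range v ⊆ Set.range B := by
  have hv' : Orthonormal 𝕜 ((↑) : Set.range v → E) :=
    (orthonormal_subtype_range hv.linearIndependent.injective).2 hv
  obtain ⟨u, b, hvu, hb⟩ := hv'.exists_orthonormalBasis_extension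
  have e : u ≃ ι := Fintype.equivOfCardEq <| by
    rw [← card_ι, Module.finrank_eq_card_basis b.toBasis]
  refine ⟨b.reindex e, ?_⟩
  rintro _ ⟨k, rfl⟩
  exact ⟨e ⟨v k, hvu ⟨k, rfl⟩⟩, by simp [hb]⟩

theorem exists_orthonormalBasis_smul_of_inner_eq_zero_or_norm_inner_eq
    (card_ι : Module.finrank 𝕜 E = Fintype.card ι) {x y : E} (hx : x ≠ 0) (hy : y ≠ 0)
    (h : ⟪x, y⟫_𝕜 = 0 ∨ ‖⟪x, y⟫_𝕜‖ = ‖x‖ * ‖y‖) :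
    ∃ (B : OrthonormalBasis ι 𝕜 E) (i j : ι) (c d : 𝕜), x = c • B i ∧ y = d • B j := by
  have hnorm {z : E} (hz : z ≠ 0) : z = (‖z‖ : 𝕜) • (‖z‖⁻¹ : 𝕜) • z := by
    rw [smul_smul, mul_inv_cancel₀ (by simpa using hz), one_smul]
  rcases h with h | h
  · have hv : Orthonormal 𝕜 ![(‖x‖⁻¹ : 𝕜) • x, (‖y‖⁻¹ : 𝕜) • y] := by
      refine ⟨fun i => ?_, fun i j hij => ?_⟩
      · fin_cases i <;> simp [norm_smul_inv_norm, hx, hy]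
      · fin_cases i <;> fin_cases j <;>
          simp_all [inner_smul_left, inner_smul_right, ← inner_conj_symm y x]
    obtain ⟨B, hB⟩ := hv.exists_orthonormalBasis_range_subset card_ι
    obtain ⟨i, hi⟩ := hB ⟨0, rfl⟩
    obtain ⟨j, hj⟩ := hB ⟨1, rfl⟩
    exact ⟨B, i, j, _, _, by rw [hi]; exact hnorm hx, by rw [hj]; exact hnorm hy⟩
  · obtain ⟨r, -, rfl⟩ := (norm_inner_eq_norm_iff hx hy).1 h
    have hv : Orthonormal 𝕜 (fun _ : Unit => (‖x‖⁻¹ : 𝕜) • x) :=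
      ⟨fun _ => norm_smul_inv_norm hx, fun i j hij => (hij (Subsingleton.elim i j)).elim⟩
    obtain ⟨B, hB⟩ := hv.exists_orthonormalBasis_range_subset card_ι
    obtain ⟨i, hi⟩ := hB ⟨(), rfl⟩
    refine ⟨B, i, i, _, r * ‖x‖, by rw [hi]; exact hnorm hx, ?_⟩
    rw [hi, mul_smul, ← hnorm hx]

end InnerProductSpace

theorem card_filter_ne_zero_le_one_iff {ι M : Type*} [Fintype ι] [Nonempty ι] [DecidableEq ι]
    [Zero M] (y : ι → M) [DecidablePred fun i => y i ≠ 0] :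
    (univ.filter fun i => y i ≠ 0).card ≤ 1 ↔ ∃ i c, y = Pi.single i c := by
  rw [card_le_one_iff_subset_singleton]
  constructor
  · rintro ⟨i, hi⟩
    refine ⟨i, y i, funext fun j => ?_⟩
    by_cases hj : j = i
    · simp [hj]
    · have : j ∉ univ.filter fun i => y i ≠ 0 := fun h => hj (mem_singleton.1 (hi h))
      simp_all
  · rintro ⟨i, c, rfl⟩
    refine ⟨i, fun j hj => ?_⟩
    by_contra h
    simp_all

section UnitaryMatrix

variable {m 𝕜 : Type*} [Fintype m] [RCLike 𝕜]

theorem col_toMatrix_basisFun (B : OrthonormalBasis m 𝕜 (EuclideanSpace 𝕜 m)) (i : m) :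
    ((EuclideanSpace.basisFun m 𝕜).toBasis.toMatrix B).col i = (B i).ofLp := by
  ext j
  simp [Module.Basis.toMatrix_apply]

variable [DecidableEq m] {Ψ : Matrix m m 𝕜}

theorem conjTranspose_mulVec_eq_iff (hΨ : Ψ ∈ unitaryGroup m 𝕜) {x y : m → 𝕜} :
    Ψᴴ *ᵥ x = y ↔ x = Ψ *ᵥ y := by
  constructor <;> rintro rfl <;> rw [mulVec_mulVec, ← star_eq_conjTranspose]
  · rw [mem_unitaryGroup_iff.mp hΨ, one_mulVec]
  · rw [mem_unitaryGroup_iff'.mp hΨ, one_mulVec]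

theorem orthonormal_toLp_col (hΨ : Ψ ∈ unitaryGroup m 𝕜) :
    Orthonormal 𝕜 fun i => (WithLp.toLp 2 (Ψ.col i) : EuclideanSpace 𝕜 m) := by
  rw [orthonormal_iff_ite]
  intro i j
  simpa [mul_apply, PiLp.inner_apply, one_apply, mul_comm] using
    congrFun (congrFun (mem_unitaryGroup_iff'.mp hΨ) i) j

end UnitaryMatrix

theorem sparse_one_iff_exists_eq_smul_col {n : ℕ} [NeZero n] {Ψ : Matrix (Fin n) (Fin n) ℂ}
    (hΨ : Ψ ∈ unitaryGroup (Fin n) ℂ) (x : Fin n → ℂ) :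
    sparse 1 Ψ x ↔ ∃ (i : Fin n) (c : ℂ), x = c • Ψ.col i := by
  simp only [sparse, card_filter_ne_zero_le_one_iff, conjTranspose_mulVec_eq_iff hΨ, mulVec_single,
    op_smul_eq_smul]

theorem inn_eq_inner {n : ℕ} (a b : Fin n → ℂ) :
    inn a b = ⟪(WithLp.toLp 2 a : EuclideanSpace ℂ (Fin n)), WithLp.toLp 2 b⟫_ℂ := by
  simp [inn, PiLp.inner_apply, mul_comm]

theorem l2norm_eq_norm {n : ℕ} (x : Fin n → ℂ) :
    l2norm x = ‖(WithLp.toLp 2 x : EuclideanSpace ℂ (Fin n))‖ := by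
  simp [l2norm, EuclideanSpace.norm_eq]

theorem norm_inn_le {n : ℕ} (a b : Fin n → ℂ) : ‖inn a b‖ ≤ l2norm a * l2norm b := by
  rw [inn_eq_inner, l2norm_eq_norm, l2norm_eq_norm]
  exact norm_inner_le_norm _ _

theorem exists_unitary_sparse_one_iff {n : ℕ} {a b : Fin n → ℂ} (ha : a ≠ 0) (hb : b ≠ 0) :
    (∃ Ψ ∈ unitaryGroup (Fin n) ℂ, sparse 1 Ψ a ∧ sparse 1 Ψ b) ↔
      inn a b = 0 ∨ ‖inn a b‖ = l2norm a * l2norm b := by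
  obtain ⟨i₀, -⟩ := Function.ne_iff.mp ha
  have : NeZero n := NeZero.of_pos i₀.pos
  constructor
  · rintro ⟨Ψ, hΨ, hsa, hsb⟩
    obtain ⟨i, c, rfl⟩ := (sparse_one_iff_exists_eq_smul_col hΨ a).1 hsa
    obtain ⟨j, d, rfl⟩ := (sparse_one_iff_exists_eq_smul_col hΨ b).1 hsb
    simpa only [inn_eq_inner, l2norm_eq_norm, WithLp.toLp_smul] using
      (orthonormal_toLp_col hΨ).inner_smul_smul_eq_zero_or_norm_inner_eq c d i j
  · intro h
    rw [inn_eq_inner, l2norm_eq_norm, l2norm_eq_norm] at h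
    obtain ⟨B, i, j, c, d, hai, hbj⟩ :=
      exists_orthonormalBasis_smul_of_inner_eq_zero_or_norm_inner_eq (ι := Fin n) (by simp)
        (by simpa using ha) (by simpa using hb) h
    have hΨ := (EuclideanSpace.basisFun (Fin n) ℂ).toMatrix_orthonormalBasis_mem_unitary B
    refine ⟨_, hΨ, (sparse_one_iff_exists_eq_smul_col hΨ a).2 ⟨i, c, ?_⟩,
      (sparse_one_iff_exists_eq_smul_col hΨ b).2 ⟨j, d, ?_⟩⟩
    · rw [col_toMatrix_basisFun, ← WithLp.ofLp_smul, ← hai]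
    · rw [col_toMatrix_basisFun, ← WithLp.ofLp_smul, ← hbj]

theorem stmt6_general {n : ℕ} (S : Set (Fin n → ℂ)) (hS : ∀ x ∈ S, x ≠ 0) :
    (∀ Ψ : Matrix (Fin n) (Fin n) ℂ, Ψ ∈ Matrix.unitaryGroup (Fin n) ℂ →
        ∀ a ∈ S, ∀ b ∈ S, sparse 1 Ψ a → sparse 1 Ψ b → a = b) ↔
    (∀ a ∈ S, ∀ b ∈ S, a ≠ b →
        0 < ‖inn a b‖ ∧ ‖inn a b‖ < l2norm a * l2norm b) := by
  have key := fun a (ha : a ∈ S) b (hb : b ∈ S) =>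
    exists_unitary_sparse_one_iff (hS a ha) (hS b hb)
  constructor
  · intro hdecode a ha b hb hab
    have hgeneric : ¬(inn a b = 0 ∨ ‖inn a b‖ = l2norm a * l2norm b) := fun h => by
      obtain ⟨Ψ, hΨ, hsa, hsb⟩ := (key a ha b hb).2 h
      exact hab (hdecode Ψ hΨ a ha b hb hsa hsb)
    push Not at hgeneric
    exact ⟨norm_pos_iff.2 hgeneric.1, (norm_inn_le a b).lt_of_ne hgeneric.2⟩
  · intro hgeneric Ψ hΨ a ha b hb hsa hsb
    by_contra hab
    obtain ⟨hpos, hlt⟩ := hgeneric a ha b hb hab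
    rcases (key a ha b hb).1 ⟨Ψ, hΨ, hsa, hsb⟩ with h0 | heq
    · simp [h0] at hpos
    · exact hlt.ne heq

theorem stmt6 {n : ℕ} (hn : 2 ≤ n) (S : Set (Fin n → ℂ)) (hS : ∀ x ∈ S, x ≠ 0) :
    (∀ Ψ : Matrix (Fin n) (Fin n) ℂ, Ψ ∈ Matrix.unitaryGroup (Fin n) ℂ →
        ∀ a ∈ S, ∀ b ∈ S, sparse 1 Ψ a → sparse 1 Ψ b → a = b) ↔
    (∀ a ∈ S, ∀ b ∈ S, a ≠ b →
        0 < ‖inn a b‖ ∧ ‖inn a b‖ < l2norm a * l2norm b) :=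
  stmt6_general S hS
end

section
/- Let a ∈ ℂ^n be nonzero, c ∈ ℂ with |c| = 1, and b = c·a. Suppose sign(Re aᵢ) = sign(Re bᵢ) and sign(Im aᵢ) = sign(Im bᵢ) for all i, and f₃(a) = f₃(b) where f₃(x) = Σ_{xᵢ≠0} msign(Re xᵢ)·Im xᵢ/(|Re xᵢ|+|Im xᵢ|). Then c = 1, i.e., a = b. -/
/-! Since the signs of the real and imaginary parts of `aᵢ` and `c aᵢ` agree, the absolute values
in both summands of `f₃` are `msign(Re aᵢ) Re ·` and `msign(Im aᵢ) Im ·`, so the difference of the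
summands collapses to `Im(aᵢ) Re(c aᵢ) - Re(aᵢ) Im(c aᵢ) = -Im(c) |aᵢ|²` over a positive
denominator. Summing, `f₃(a) = f₃(c a)` forces `Im c = 0`, so `c = ±1`, and `c = -1` would flip
the sign of every nonzero part of `a`. -/

open Matrix Finset Complex

noncomputable def sgn (t : ℝ) : ℤ := if 0 < t then 1 else if t < 0 then -1 else 0

noncomputable def msign (t : ℝ) : ℝ := if 0 ≤ t then 1 else -1

noncomputable def f3 {n : ℕ} (x : Fin n → ℂ) : ℝ :=
  ∑ i ∈ Finset.univ.filter (fun i => x i ≠ 0),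
    msign (x i).re * (x i).im / (|(x i).re| + |(x i).im|)

lemma sgn_eq_zero_iff {t : ℝ} : sgn t = 0 ↔ t = 0 := by
  unfold sgn
  split_ifs <;> simp <;> linarith

lemma sgn_neg (t : ℝ) : sgn (-t) = -sgn t := by
  unfold sgn
  split_ifs <;> first | rfl | linarith

lemma eq_zero_of_sgn_neg_eq {t : ℝ} (h : sgn (-t) = sgn t) : t = 0 := by
  rw [sgn_neg] at h
  exact sgn_eq_zero_iff.mp (by omega)

lemma msign_eq_of_sgn_eq {x y : ℝ} (h : sgn x = sgn y) : msign x = msign y := by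
  unfold sgn at h; unfold msign
  split_ifs at h ⊢ <;> first | rfl | linarith

lemma msign_mul_self (t : ℝ) : msign t * msign t = 1 := by
  unfold msign
  split_ifs <;> norm_num

lemma msign_mul_self_eq_abs (t : ℝ) : msign t * t = |t| := by
  unfold msign
  split_ifs with h
  · rw [one_mul, abs_of_nonneg h]
  · rw [neg_one_mul, abs_of_neg (not_le.mp h)]

lemma abs_re_add_abs_im_pos {z : ℂ} (hz : z ≠ 0) : 0 < |z.re| + |z.im| := by
  by_contra! h
  have h0 := (add_eq_zero_iff_of_nonneg (abs_nonneg z.re) (abs_nonneg z.im)).mp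
    (le_antisymm h (by positivity))
  exact hz (Complex.ext (abs_eq_zero.mp h0.1) (abs_eq_zero.mp h0.2))

lemma eq_zero_iff_of_sgn_eq {z w : ℂ} (hre : sgn z.re = sgn w.re) (him : sgn z.im = sgn w.im) :
    z = 0 ↔ w = 0 := by
  simp only [Complex.ext_iff, zero_re, zero_im, ← sgn_eq_zero_iff, hre, him]

-- At `0` this is `0 / 0 = 0`, so `f3` may sum it over all coordinates.
noncomputable def f3Summand (z : ℂ) : ℝ := msign z.re * z.im / (|z.re| + |z.im|)

lemma f3_eq_sum_f3Summand {n : ℕ} (x : Fin n → ℂ) : f3 x = ∑ i, f3Summand (x i) := by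
  refine Finset.sum_filter_of_ne fun i _ h hi => h ?_
  simp [hi]

lemma f3Summand_sub_f3Summand {z w : ℂ} (hre : sgn z.re = sgn w.re) (him : sgn z.im = sgn w.im) :
    f3Summand z - f3Summand w =
      (z.im * w.re - z.re * w.im) / ((|z.re| + |z.im|) * (|w.re| + |w.im|)) := by
  by_cases hz : z = 0
  · obtain rfl : w = 0 := (eq_zero_iff_of_sgn_eq hre him).mp hz
    simp [hz, f3Summand]
  have hw : w ≠ 0 := fun hw => hz ((eq_zero_iff_of_sgn_eq hre him).mpr hw)
  rw [f3Summand, f3Summand, div_sub_div _ _ (abs_re_add_abs_im_pos hz).ne'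
    (abs_re_add_abs_im_pos hw).ne']
  simp only [← msign_mul_self_eq_abs, ← msign_eq_of_sgn_eq hre, ← msign_eq_of_sgn_eq him]
  congr 1
  linear_combination (z.im * w.re - z.re * w.im) * msign_mul_self z.re

lemma im_mul_re_sub_re_mul_im (c z : ℂ) :
    z.im * (c * z).re - z.re * (c * z).im = -c.im * normSq z := by
  simp only [mul_re, mul_im, normSq_apply]
  ring

lemma im_eq_zero_of_f3_eq_f3_smul {n : ℕ} {a : Fin n → ℂ} (ha : a ≠ 0) {c : ℂ}
    (hre : ∀ i, sgn (a i).re = sgn ((c • a) i).re) (him : ∀ i, sgn (a i).im = sgn ((c • a) i).im)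
    (hf3 : f3 a = f3 (c • a)) : c.im = 0 := by
  have hdiff : f3 a - f3 (c • a) = -c.im * ∑ i, normSq (a i) /
      ((|(a i).re| + |(a i).im|) * (|(c * a i).re| + |(c * a i).im|)) := by
    simp only [f3_eq_sum_f3Summand, ← Finset.sum_sub_distrib, Finset.mul_sum, ← mul_div_assoc]
    refine Finset.sum_congr rfl fun i _ => ?_
    rw [f3Summand_sub_f3Summand (hre i) (him i), ← im_mul_re_sub_re_mul_im]
    rfl
  obtain ⟨i, hi⟩ := Function.ne_iff.mp ha
  have hpos : 0 < ∑ i, normSq (a i) /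
      ((|(a i).re| + |(a i).im|) * (|(c * a i).re| + |(c * a i).im|)) := by
    refine Finset.sum_pos' (fun j _ => div_nonneg (normSq_nonneg _) (by positivity)) ⟨i, Finset.mem_univ _, ?_⟩
    have hci : c * a i ≠ 0 := (eq_zero_iff_of_sgn_eq (hre i) (him i)).not.mp hi
    exact div_pos (normSq_pos.mpr hi)
      (mul_pos (abs_re_add_abs_im_pos hi) (abs_re_add_abs_im_pos hci))
  rw [hf3, sub_self, eq_comm, mul_eq_zero, neg_eq_zero] at hdiff
  exact hdiff.resolve_right hpos.ne'

lemma eq_one_of_sgn_eq_of_im_eq_zero {c z : ℂ} (hc : ‖c‖ = 1) (hcim : c.im = 0) (hz : z ≠ 0)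
    (hre : sgn z.re = sgn (c * z).re) (him : sgn z.im = sgn (c * z).im) : c = 1 := by
  have hcre : c.re = 1 ∨ c.re = -1 := by
    rw [← abs_eq zero_le_one, ← hc, abs_re_eq_norm.mpr hcim]
  rcases hcre with hcre | hcre
  · exact Complex.ext hcre hcim
  · obtain rfl : c = -1 := Complex.ext (by simp [hcre]) (by simp [hcim])
    simp only [neg_one_mul, neg_re, neg_im] at hre him
    exact absurd (Complex.ext (eq_zero_of_sgn_neg_eq hre.symm) (eq_zero_of_sgn_neg_eq him.symm)) hz

theorem stmt16 {n : ℕ} (a : Fin n → ℂ) (ha : a ≠ 0) (c : ℂ) (hc : ‖c‖ = 1)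
    (b : Fin n → ℂ) (hb : b = c • a)
    (hre : ∀ i, sgn (a i).re = sgn (b i).re) (him : ∀ i, sgn (a i).im = sgn (b i).im)
    (hf3 : f3 a = f3 b) :
    c = 1 ∧ a = b := by
  subst hb
  obtain ⟨i, hi⟩ := Function.ne_iff.mp ha
  have hcim : c.im = 0 := im_eq_zero_of_f3_eq_f3_smul ha hre him hf3
  have hc1 : c = 1 := eq_one_of_sgn_eq_of_im_eq_zero hc hcim hi (hre i) (him i)
  exact ⟨hc1, by rw [hc1, one_smul]⟩
end
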